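/- arXiv:2508.17828 — 2 statements merged into one kernel-verified Lean document; each statement's English description precedes it below -/
import Mathlib

section
/- Let (q_i), (x_i), (l_i), i = 1..d, be three mutually independent families of i.i.d. square-integrable random variables with common distribution having variance σ² > 0 and finite fourth moment. Define Γ(l,q) = sqrt(∑_i (l_i - q_i)²) and Γ(l,x) = sqrt(∑_i (l_i - x_i)²). Then (1/√d)·|Γ(l,q) - Γ(l,x)| converges to 0 in probability as d → ∞; equivalently, both Γ(l,q)/√(2d σ²) and Γ(l,x)/√(2d σ²) converge to 1 in probability. -/
open MeasureTheory ProbabilityTheory Filter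

lemma dc_map_int {Ω : Type*} [MeasurableSpace Ω] {P : Measure Ω} {ν : Measure ℝ}
    (f : Ω → ℝ) (hf : Measurable f) (hmap : Measure.map f P = ν)
    {g : ℝ → ℝ} (hg : Measurable g) (hgint : Integrable g ν) :
    Integrable (fun ω => g (f ω)) P ∧ ∫ ω, g (f ω) ∂P = ∫ y, g y ∂ν := by
  constructor
  · exact (integrable_map_measure (hmap ▸ hg.aestronglyMeasurable) hf.aemeasurable).mp
      (by rw [hmap]; exact hgint)
  · rw [← hmap, integral_map hf.aemeasurable (hmap ▸ hg.aestronglyMeasurable)]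

lemma dc_aux {Ω : Type*} [MeasurableSpace Ω] (P : Measure Ω) [IsProbabilityMeasure P]
    (a b : ℕ → Ω → ℝ) (ν : Measure ℝ) [IsProbabilityMeasure ν]
    (ha_meas : ∀ i, Measurable (a i)) (hb_meas : ∀ i, Measurable (b i))
    (ha : ∀ i, Measure.map (a i) P = ν) (hb : ∀ i, Measure.map (b i) P = ν)
    (hAB : ∀ i j, i ≠ j → IndepFun (fun ω => (a i ω, b i ω)) (fun ω => (a j ω, b j ω)) P)
    (hab : ∀ i, IndepFun (a i) (b i) P)
    (μ0 σ : ℝ) (hmean : ∫ y, y ∂ν = μ0) (hvar : ∫ y, (y - μ0) ^ 2 ∂ν = σ ^ 2)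
    (hmom4 : Integrable (fun y => y ^ 4) ν) :
    ∀ᵐ ω ∂P, Filter.Tendsto
      (fun d : ℕ => (∑ i ∈ Finset.range d, (b i ω - a i ω) ^ 2) / d)
      atTop (nhds (2 * σ ^ 2)) := by
  -- integrability facts over ν
  have hν2 : Integrable (fun y : ℝ => y ^ 2) ν := by
    refine ((integrable_const (1:ℝ)).add hmom4).mono' (by fun_prop) ?_
    filter_upwards with y
    have h : y ^ 2 ≤ 1 + y ^ 4 := by nlinarith [sq_nonneg (y ^ 2 - 1)]
    simpa [abs_of_nonneg (sq_nonneg y)] using h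
  have hν1 : Integrable (fun y : ℝ => y) ν := by
    refine ((integrable_const (1:ℝ)).add hν2).mono' aestronglyMeasurable_id ?_
    filter_upwards with y
    have h : |y| ≤ 1 + y ^ 2 := by
      nlinarith [sq_nonneg (|y| - 1), sq_abs y, abs_nonneg y]
    simpa using h
  set m2 : ℝ := ∫ y, y ^ 2 ∂ν with hm2
  have hm2σ : m2 = σ ^ 2 + μ0 ^ 2 := by
    have he : (fun y : ℝ => (y - μ0) ^ 2) = fun y => y ^ 2 - (2 * μ0) * y + μ0 ^ 2 := by
      funext y; ring
    rw [he] at hvar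
    have hI0 : Integrable (fun y : ℝ => (2 * μ0) * y) ν := hν1.const_mul _
    have hI1 : Integrable (fun y : ℝ => y ^ 2 - (2 * μ0) * y) ν := hν2.sub hI0
    rw [integral_add hI1 (integrable_const _),
      integral_sub hν2 hI0, integral_const_mul, hmean, integral_const] at hvar
    simp only [probReal_univ, measure_univ, ENNReal.toReal_one, one_smul] at hvar
    rw [← hm2] at hvar
    nlinarith [hvar]
  -- the squared differences
  set Y : ℕ → Ω → ℝ := fun i ω => (b i ω - a i ω) ^ 2 with hYdef
  have hg : Measurable (fun p : ℝ × ℝ => (p.2 - p.1) ^ 2) := by fun_prop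
  have hpairmeas : ∀ i, Measurable (fun ω => (a i ω, b i ω)) :=
    fun i => (ha_meas i).prodMk (hb_meas i)
  have hmapPair : ∀ i, Measure.map (fun ω => (a i ω, b i ω)) P = ν.prod ν := by
    intro i
    rw [(indepFun_iff_map_prod_eq_prod_map_map (ha_meas i).aemeasurable
      (hb_meas i).aemeasurable).mp (hab i), ha i, hb i]
  have hident : ∀ i, IdentDistrib (Y i) (Y 0) P P := by
    intro i
    have hp : IdentDistrib (fun ω => (a i ω, b i ω)) (fun ω => (a 0 ω, b 0 ω)) P P :=
      ⟨(hpairmeas i).aemeasurable, (hpairmeas 0).aemeasurable, by rw [hmapPair i, hmapPair 0]⟩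
    exact hp.comp hg
  have hpairind : Pairwise (Function.onFun (IndepFun · · P) Y) := by
    intro i j hij
    exact (hAB i j hij).comp hg hg
  -- integrability of Y 0
  have hInta2 : Integrable (fun ω => (a 0 ω) ^ 2) P :=
    (dc_map_int (a 0) (ha_meas 0) (ha 0) (by fun_prop) hν2).1
  have hIntb2 : Integrable (fun ω => (b 0 ω) ^ 2) P :=
    (dc_map_int (b 0) (hb_meas 0) (hb 0) (by fun_prop) hν2).1
  have hInta1 : Integrable (a 0) P :=
    (dc_map_int (a 0) (ha_meas 0) (ha 0) measurable_id hν1).1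
  have hIntb1 : Integrable (b 0) P :=
    (dc_map_int (b 0) (hb_meas 0) (hb 0) measurable_id hν1).1
  have hIntab : Integrable (fun ω => a 0 ω * b 0 ω) P := by
    refine ((hInta2.const_mul (1/2 : ℝ)).add (hIntb2.const_mul (1/2 : ℝ))).mono' ?_ ?_
    · exact ((ha_meas 0).mul (hb_meas 0)).aestronglyMeasurable
    · filter_upwards with ω
      have h : |a 0 ω * b 0 ω| ≤ 1/2 * (a 0 ω) ^ 2 + 1/2 * (b 0 ω) ^ 2 := by
        rw [abs_mul]
        nlinarith [sq_nonneg (|a 0 ω| - |b 0 ω|), sq_abs (a 0 ω), sq_abs (b 0 ω),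
          abs_nonneg (a 0 ω), abs_nonneg (b 0 ω)]
      simpa only [Pi.add_apply, Real.norm_eq_abs] using h
  have hYeq : Y 0 = fun ω => (b 0 ω) ^ 2 - 2 * (a 0 ω * b 0 ω) + (a 0 ω) ^ 2 := by
    funext ω; simp only [hYdef]; ring
  have hI2 : Integrable (fun ω => 2 * (a 0 ω * b 0 ω)) P := hIntab.const_mul 2
  have hI1 : Integrable (fun ω => (b 0 ω) ^ 2 - 2 * (a 0 ω * b 0 ω)) P := hIntb2.sub hI2
  have hIntY : Integrable (Y 0) P := by
    rw [hYeq]; exact hI1.add hInta2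
  -- expectation of Y 0
  have hEa : ∫ ω, a 0 ω ∂P = μ0 := by
    have h := (dc_map_int (a 0) (ha_meas 0) (ha 0) measurable_id hν1).2
    simpa [hmean] using h
  have hEb : ∫ ω, b 0 ω ∂P = μ0 := by
    have h := (dc_map_int (b 0) (hb_meas 0) (hb 0) measurable_id hν1).2
    simpa [hmean] using h
  have hEa2 : ∫ ω, (a 0 ω) ^ 2 ∂P = m2 :=
    (dc_map_int (a 0) (ha_meas 0) (ha 0) (by fun_prop) hν2).2
  have hEb2 : ∫ ω, (b 0 ω) ^ 2 ∂P = m2 :=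
    (dc_map_int (b 0) (hb_meas 0) (hb 0) (by fun_prop) hν2).2
  have hEab : ∫ ω, a 0 ω * b 0 ω ∂P = μ0 * μ0 := by
    rw [(hab 0).integral_fun_mul_eq_mul_integral (ha_meas 0).aestronglyMeasurable
      (hb_meas 0).aestronglyMeasurable, hEa, hEb]
  have hEY : ∫ ω, Y 0 ω ∂P = 2 * σ ^ 2 := by
    rw [hYeq, integral_add hI1 hInta2,
      integral_sub hIntb2 hI2, integral_const_mul, hEab, hEa2, hEb2, hm2σ]
    ring
  have hslln := ProbabilityTheory.strong_law_ae Y hIntY hpairind hident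
  filter_upwards [hslln] with ω hω
  have hω' : Filter.Tendsto (fun n : ℕ => ((n : ℝ))⁻¹ • ∑ i ∈ Finset.range n, Y i ω)
      atTop (nhds (2 * σ ^ 2)) := by
    rwa [hEY] at hω
  refine hω'.congr (fun n => ?_)
  simp [hYdef, div_eq_inv_mul, smul_eq_mul]

/-- Distance concentration (Theorem 1): for mutually independent i.i.d. families
`q_i, x_i, l_i` with variance `σ² > 0` and finite fourth moment,
`|Γ(l,q) - Γ(l,x)|/√d → 0` in probability, and both `Γ(l,q)/√(2dσ²)` and
`Γ(l,x)/√(2dσ²)` converge to 1 in probability, as `d → ∞`. -/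
theorem distance_concentration {Ω : Type*} [MeasurableSpace Ω]
    (P : Measure Ω) [IsProbabilityMeasure P]
    (q x l : ℕ → Ω → ℝ) (ν : Measure ℝ) [IsProbabilityMeasure ν]
    (hmeas : ∀ i, Measurable (q i) ∧ Measurable (x i) ∧ Measurable (l i))
    (hq : ∀ i, Measure.map (q i) P = ν)
    (hx : ∀ i, Measure.map (x i) P = ν)
    (hl : ∀ i, Measure.map (l i) P = ν)
    (hindep : iIndepFun
      (Sum.elim q (Sum.elim x l) : (ℕ ⊕ (ℕ ⊕ ℕ)) → Ω → ℝ) P)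
    (μ0 σ : ℝ) (hσ : 0 < σ ^ 2)
    (hmean : ∫ y, y ∂ν = μ0)
    (hvar : ∫ y, (y - μ0) ^ 2 ∂ν = σ ^ 2)
    (hmom4 : Integrable (fun y => y ^ 4) ν) :
    TendstoInMeasure P
      (fun (d : ℕ) ω => (1 / Real.sqrt (d : ℝ)) *
        |Real.sqrt (∑ i ∈ Finset.range d, (l i ω - q i ω) ^ 2) -
          Real.sqrt (∑ i ∈ Finset.range d, (l i ω - x i ω) ^ 2)|)
      atTop (fun _ => 0) ∧
    TendstoInMeasure P
      (fun (d : ℕ) ω => Real.sqrt (∑ i ∈ Finset.range d, (l i ω - q i ω) ^ 2) /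
        Real.sqrt (2 * (d : ℝ) * σ ^ 2)) atTop (fun _ => 1) ∧
    TendstoInMeasure P
      (fun (d : ℕ) ω => Real.sqrt (∑ i ∈ Finset.range d, (l i ω - x i ω) ^ 2) /
        Real.sqrt (2 * (d : ℝ) * σ ^ 2)) atTop (fun _ => 1) := by
  classical
  set F : (ℕ ⊕ (ℕ ⊕ ℕ)) → Ω → ℝ := Sum.elim q (Sum.elim x l) with hF
  have hFmeas : ∀ k, Measurable (F k) := by
    rintro (i | i | i)
    · exact (hmeas i).1
    · exact (hmeas i).2.1
    · exact (hmeas i).2.2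
  -- a.e. convergence for (q, l)
  have hae1 := dc_aux P q l ν (fun i => (hmeas i).1) (fun i => (hmeas i).2.2) hq hl
    (fun i j hij => by
      have h := hindep.indepFun_prodMk_prodMk hFmeas
        (Sum.inl i) (Sum.inr (Sum.inr i)) (Sum.inl j) (Sum.inr (Sum.inr j))
        (by simp [hij]) (by simp) (by simp) (by simp [hij])
      exact h)
    (fun i => hindep.indepFun (by simp : (Sum.inl i : ℕ ⊕ (ℕ ⊕ ℕ)) ≠ Sum.inr (Sum.inr i)))
    μ0 σ hmean hvar hmom4
  have hae2 := dc_aux P x l ν (fun i => (hmeas i).2.1) (fun i => (hmeas i).2.2) hx hl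
    (fun i j hij => by
      have h := hindep.indepFun_prodMk_prodMk hFmeas
        (Sum.inr (Sum.inl i)) (Sum.inr (Sum.inr i)) (Sum.inr (Sum.inl j)) (Sum.inr (Sum.inr j))
        (by simp [hij]) (by simp) (by simp) (by simp [hij])
      exact h)
    (fun i => hindep.indepFun
      (by simp : (Sum.inr (Sum.inl i) : ℕ ⊕ (ℕ ⊕ ℕ)) ≠ Sum.inr (Sum.inr i)))
    μ0 σ hmean hvar hmom4
  set S1 : ℕ → Ω → ℝ := fun d ω => ∑ i ∈ Finset.range d, (l i ω - q i ω) ^ 2 with hS1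
  set S2 : ℕ → Ω → ℝ := fun d ω => ∑ i ∈ Finset.range d, (l i ω - x i ω) ^ 2 with hS2
  have hS1nonneg : ∀ d ω, 0 ≤ S1 d ω := fun d ω => Finset.sum_nonneg fun i _ => sq_nonneg _
  have hS2nonneg : ∀ d ω, 0 ≤ S2 d ω := fun d ω => Finset.sum_nonneg fun i _ => sq_nonneg _
  have hc : (0:ℝ) < Real.sqrt (2 * σ ^ 2) := Real.sqrt_pos.mpr (by linarith)
  have hS1meas : ∀ d, Measurable (S1 d) := by
    intro d
    exact Finset.measurable_sum _ fun i _ => (((hmeas i).2.2.sub (hmeas i).1).pow_const 2)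
  have hS2meas : ∀ d, Measurable (S2 d) := by
    intro d
    exact Finset.measurable_sum _ fun i _ => (((hmeas i).2.2.sub (hmeas i).2.1).pow_const 2)
  -- key rewriting: for d ≥ 1, √(S d ω) / √(2dσ²) = √((S d ω / d) / (2σ²))
  have key : ∀ (d : ℕ), 1 ≤ d → ∀ ω (S : ℕ → Ω → ℝ), (∀ d ω, 0 ≤ S d ω) →
      Real.sqrt (S d ω) / Real.sqrt (2 * (d:ℝ) * σ ^ 2)
        = Real.sqrt ((S d ω / d) / (2 * σ ^ 2)) := by
    intro d hd ω S hSnn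
    have hd0 : (0:ℝ) < d := by exact_mod_cast hd
    rw [Real.sqrt_div (div_nonneg (hSnn d ω) hd0.le), Real.sqrt_div (hSnn d ω),
      show (2 * (d:ℝ) * σ ^ 2) = (d:ℝ) * (2 * σ ^ 2) by ring,
      Real.sqrt_mul (by positivity) (2 * σ ^ 2)]
    field_simp
  -- a.e. tendsto for the second claim
  have hT1 : ∀ᵐ ω ∂P, Filter.Tendsto
      (fun d : ℕ => Real.sqrt (S1 d ω) / Real.sqrt (2 * (d:ℝ) * σ ^ 2))
      atTop (nhds 1) := by
    filter_upwards [hae1] with ω hω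
    have h1 : Filter.Tendsto (fun d : ℕ => Real.sqrt ((S1 d ω / d) / (2 * σ ^ 2)))
        atTop (nhds 1) := by
      have h2 : Filter.Tendsto (fun d : ℕ => (S1 d ω / d) / (2 * σ ^ 2))
          atTop (nhds ((2 * σ ^ 2) / (2 * σ ^ 2))) := hω.div_const _
      rw [div_self (by linarith : (2 * σ ^ 2) ≠ 0)] at h2
      have := (Real.continuous_sqrt.tendsto 1).comp h2
      simpa [Function.comp_def] using this
    refine h1.congr' ?_
    filter_upwards [eventually_ge_atTop 1] with d hd
    exact (key d hd ω S1 hS1nonneg).symm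
  have hT2 : ∀ᵐ ω ∂P, Filter.Tendsto
      (fun d : ℕ => Real.sqrt (S2 d ω) / Real.sqrt (2 * (d:ℝ) * σ ^ 2))
      atTop (nhds 1) := by
    filter_upwards [hae2] with ω hω
    have h1 : Filter.Tendsto (fun d : ℕ => Real.sqrt ((S2 d ω / d) / (2 * σ ^ 2)))
        atTop (nhds 1) := by
      have h2 : Filter.Tendsto (fun d : ℕ => (S2 d ω / d) / (2 * σ ^ 2))
          atTop (nhds ((2 * σ ^ 2) / (2 * σ ^ 2))) := hω.div_const _
      rw [div_self (by linarith : (2 * σ ^ 2) ≠ 0)] at h2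
      have := (Real.continuous_sqrt.tendsto 1).comp h2
      simpa [Function.comp_def] using this
    refine h1.congr' ?_
    filter_upwards [eventually_ge_atTop 1] with d hd
    exact (key d hd ω S2 hS2nonneg).symm
  -- a.e. tendsto for the first claim
  have hT0 : ∀ᵐ ω ∂P, Filter.Tendsto
      (fun d : ℕ => (1 / Real.sqrt (d:ℝ)) * |Real.sqrt (S1 d ω) - Real.sqrt (S2 d ω)|)
      atTop (nhds 0) := by
    filter_upwards [hae1, hae2] with ω hω1 hω2
    have h1 : Filter.Tendsto (fun d : ℕ => Real.sqrt (S1 d ω / d)) atTop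
        (nhds (Real.sqrt (2 * σ ^ 2))) := (Real.continuous_sqrt.tendsto _).comp hω1
    have h2 : Filter.Tendsto (fun d : ℕ => Real.sqrt (S2 d ω / d)) atTop
        (nhds (Real.sqrt (2 * σ ^ 2))) := (Real.continuous_sqrt.tendsto _).comp hω2
    have h3 : Filter.Tendsto
        (fun d : ℕ => |Real.sqrt (S1 d ω / d) - Real.sqrt (S2 d ω / d)|) atTop (nhds 0) := by
      have := (h1.sub h2).abs
      simpa using this
    refine h3.congr' ?_
    filter_upwards [eventually_ge_atTop 1] with d hd
    have hd0 : (0:ℝ) < d := by exact_mod_cast hd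
    rw [Real.sqrt_div (hS1nonneg d ω), Real.sqrt_div (hS2nonneg d ω),
      div_sub_div_same, abs_div, abs_of_nonneg (Real.sqrt_nonneg (d:ℝ)),
      div_eq_inv_mul, ← one_div]
  -- measurability of the processes
  have hM0 : ∀ d : ℕ, AEStronglyMeasurable
      (fun ω => (1 / Real.sqrt (d:ℝ)) * |Real.sqrt (S1 d ω) - Real.sqrt (S2 d ω)|) P := by
    intro d
    exact (measurable_const.mul
      (((hS1meas d).sqrt.sub (hS2meas d).sqrt).abs)).aestronglyMeasurable
  have hM1 : ∀ d : ℕ, AEStronglyMeasurable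
      (fun ω => Real.sqrt (S1 d ω) / Real.sqrt (2 * (d:ℝ) * σ ^ 2)) P := by
    intro d
    exact ((hS1meas d).sqrt.div_const _).aestronglyMeasurable
  have hM2 : ∀ d : ℕ, AEStronglyMeasurable
      (fun ω => Real.sqrt (S2 d ω) / Real.sqrt (2 * (d:ℝ) * σ ^ 2)) P := by
    intro d
    exact ((hS2meas d).sqrt.div_const _).aestronglyMeasurable
  refine ⟨?_, ?_, ?_⟩
  · exact tendstoInMeasure_of_tendsto_ae hM0 hT0
  · exact tendstoInMeasure_of_tendsto_ae hM1 hT1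
  · exact tendstoInMeasure_of_tendsto_ae hM2 hT2
end

section
/- For any vectors q, x, l in R^d with q ≠ l, x ≠ l, and any real γ with 0 ≤ γ ≤ 1 - cos θ where cos θ = ⟨q - l, x - l⟩/(‖q - l‖·‖x - l‖), the quantity g = (Γ(l,q) - Γ(l,x))² + 2γ·Γ(l,q)·Γ(l,x) satisfies g ≤ Γ(q,x)². -/
open RealInnerProductSpace

/-- If `0 ≤ γ ≤ 1 - cos θ`, where `θ` is the angle at `l` in the triangle `l q x`,
then `g = (Γ(l,q) - Γ(l,x))² + 2γ·Γ(l,q)·Γ(l,x)` is a lower bound on `Γ(q,x)²`. -/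
theorem relaxed_lower_bound_valid {d : ℕ} (q x l : EuclideanSpace ℝ (Fin d))
    (hq : q ≠ l) (hx : x ≠ l) (γ : ℝ) (hγ0 : 0 ≤ γ)
    (hγ : γ ≤ 1 - ⟪q - l, x - l⟫ / (‖q - l‖ * ‖x - l‖)) :
    (dist l q - dist l x) ^ 2 + 2 * γ * dist l q * dist l x ≤ dist q x ^ 2 := by
  have ha : dist l q = ‖q - l‖ := by rw [dist_comm, dist_eq_norm]
  have hb : dist l x = ‖x - l‖ := by rw [dist_comm, dist_eq_norm]
  have haq : (0:ℝ) < ‖q - l‖ := by simpa [sub_eq_zero] using hq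
  have hax : (0:ℝ) < ‖x - l‖ := by simpa [sub_eq_zero] using hx
  have hd : dist q x ^ 2 = ‖q - l‖ ^ 2 + ‖x - l‖ ^ 2 - 2 * ⟪q - l, x - l⟫ := by
    rw [dist_eq_norm]
    have : q - x = (q - l) - (x - l) := by abel
    rw [this, @norm_sub_sq_real]
    ring
  have hab : (0:ℝ) < ‖q - l‖ * ‖x - l‖ := mul_pos haq hax
  have key : γ * (‖q - l‖ * ‖x - l‖) ≤ ‖q - l‖ * ‖x - l‖ - ⟪q - l, x - l⟫ := by
    have := mul_le_mul_of_nonneg_right hγ hab.le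
    calc γ * (‖q - l‖ * ‖x - l‖) ≤ (1 - ⟪q - l, x - l⟫ / (‖q - l‖ * ‖x - l‖)) * (‖q - l‖ * ‖x - l‖) := this
      _ = ‖q - l‖ * ‖x - l‖ - ⟪q - l, x - l⟫ := by field_simp
  rw [ha, hb, hd]
  nlinarith [key]
end
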